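/- For every n ≥ 4, the graph K_n^+ satisfies σ□_V(K_n^+) = σ□_E(K_n^+) = 1. -/

import Mathlib

open SimpleGraph

/-- An `l`-track on `G`: a surjective function whose consecutive values are adjacent. -/
def IsTrack {V : Type*} (G : SimpleGraph V) {l : ℕ} (f : Fin l → V) : Prop :=
  Function.Surjective f ∧
    ∀ i : ℕ, ∀ hi : i + 1 < l, G.Adj (f ⟨i, Nat.lt_of_succ_lt hi⟩) (f ⟨i + 1, hi⟩)

/-- A lazy `l`-track on `G`: consecutive values are adjacent or equal. -/
def IsLazyTrack {V : Type*} (G : SimpleGraph V) {l : ℕ} (f : Fin l → V) : Prop :=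
  Function.Surjective f ∧
    ∀ i : ℕ, ∀ hi : i + 1 < l,
      G.Adj (f ⟨i, Nat.lt_of_succ_lt hi⟩) (f ⟨i + 1, hi⟩) ∨
        f ⟨i, Nat.lt_of_succ_lt hi⟩ = f ⟨i + 1, hi⟩

/-- The condition that every edge of `G` is traversed by `f`. -/
def SweepCond {V : Type*} (G : SimpleGraph V) {l : ℕ} (f : Fin l → V) : Prop :=
  ∀ e ∈ G.edgeSet, ∃ i : ℕ, ∃ hi : i + 1 < l,
    e = s(f ⟨i, Nat.lt_of_succ_lt hi⟩, f ⟨i + 1, hi⟩)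

/-- An `l`-sweep on `G`: an `l`-track traversing every edge. -/
def IsSweep {V : Type*} (G : SimpleGraph V) {l : ℕ} (f : Fin l → V) : Prop :=
  IsTrack G f ∧ SweepCond G f

/-- A lazy `l`-sweep on `G`: a lazy `l`-track traversing every edge. -/
def IsLazySweep {V : Type*} (G : SimpleGraph V) {l : ℕ} (f : Fin l → V) : Prop :=
  IsLazyTrack G f ∧ SweepCond G f

/-- `f` and `g` are opposite: at each step exactly `f` moves iff `g` stays. -/
def IsOpposite {V : Type*} (G : SimpleGraph V) {l : ℕ} (f g : Fin l → V) : Prop :=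
  ∀ i : ℕ, ∀ hi : i + 1 < l,
    (G.Adj (f ⟨i, Nat.lt_of_succ_lt hi⟩) (f ⟨i + 1, hi⟩) ↔
      g ⟨i, Nat.lt_of_succ_lt hi⟩ = g ⟨i + 1, hi⟩)

/-- The distance `m_G(f,g)`: minimal distance between simultaneous positions. -/
noncomputable def mDist {V : Type*} (G : SimpleGraph V) {l : ℕ} (f g : Fin l → V) : ℕ :=
  sInf {d | ∃ i : Fin l, G.dist (f i) (g i) = d}

/-- Strong vertex span `σ⊠_V(G)`. -/
noncomputable def strongVertexSpan {V : Type*} (G : SimpleGraph V) : ℕ :=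
  sSup {d | ∃ (l : ℕ) (f g : Fin l → V), IsLazyTrack G f ∧ IsLazyTrack G g ∧ mDist G f g = d}

/-- Direct vertex span `σ×_V(G)`. -/
noncomputable def directVertexSpan {V : Type*} (G : SimpleGraph V) : ℕ :=
  sSup {d | ∃ (l : ℕ) (f g : Fin l → V), IsTrack G f ∧ IsTrack G g ∧ mDist G f g = d}

/-- Cartesian vertex span `σ□_V(G)`. -/
noncomputable def cartesianVertexSpan {V : Type*} (G : SimpleGraph V) : ℕ :=
  sSup {d | ∃ (l : ℕ) (f g : Fin l → V),
    IsLazyTrack G f ∧ IsLazyTrack G g ∧ IsOpposite G f g ∧ mDist G f g = d}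

/-- Strong edge span `σ⊠_E(G)`. -/
noncomputable def strongEdgeSpan {V : Type*} (G : SimpleGraph V) : ℕ :=
  sSup {d | ∃ (l : ℕ) (f g : Fin l → V), IsLazySweep G f ∧ IsLazySweep G g ∧ mDist G f g = d}

/-- Direct edge span `σ×_E(G)`. -/
noncomputable def directEdgeSpan {V : Type*} (G : SimpleGraph V) : ℕ :=
  sSup {d | ∃ (l : ℕ) (f g : Fin l → V), IsSweep G f ∧ IsSweep G g ∧ mDist G f g = d}

/-- Cartesian edge span `σ□_E(G)`. -/
noncomputable def cartesianEdgeSpan {V : Type*} (G : SimpleGraph V) : ℕ :=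
  sSup {d | ∃ (l : ℕ) (f g : Fin l → V),
    IsLazySweep G f ∧ IsLazySweep G g ∧ IsOpposite G f g ∧ mDist G f g = d}

/-- `L⊠_V(G)`: minimal length of lazy tracks realizing the strong vertex span. -/
noncomputable def strongVertexL {V : Type*} (G : SimpleGraph V) : ℕ :=
  sInf {l | ∃ f g : Fin l → V,
    IsLazyTrack G f ∧ IsLazyTrack G g ∧ mDist G f g = strongVertexSpan G}

/-- `L×_V(G)`. -/
noncomputable def directVertexL {V : Type*} (G : SimpleGraph V) : ℕ :=
  sInf {l | ∃ f g : Fin l → V,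
    IsTrack G f ∧ IsTrack G g ∧ mDist G f g = directVertexSpan G}

/-- `L□_V(G)`. -/
noncomputable def cartesianVertexL {V : Type*} (G : SimpleGraph V) : ℕ :=
  sInf {l | ∃ f g : Fin l → V,
    IsLazyTrack G f ∧ IsLazyTrack G g ∧ IsOpposite G f g ∧ mDist G f g = cartesianVertexSpan G}

/-- `L⊠_E(G)`. -/
noncomputable def strongEdgeL {V : Type*} (G : SimpleGraph V) : ℕ :=
  sInf {l | ∃ f g : Fin l → V,
    IsLazySweep G f ∧ IsLazySweep G g ∧ mDist G f g = strongEdgeSpan G}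

/-- `L×_E(G)`. -/
noncomputable def directEdgeL {V : Type*} (G : SimpleGraph V) : ℕ :=
  sInf {l | ∃ f g : Fin l → V,
    IsSweep G f ∧ IsSweep G g ∧ mDist G f g = directEdgeSpan G}

/-- `L□_E(G)`. -/
noncomputable def cartesianEdgeL {V : Type*} (G : SimpleGraph V) : ℕ :=
  sInf {l | ∃ f g : Fin l → V,
    IsLazySweep G f ∧ IsLazySweep G g ∧ IsOpposite G f g ∧ mDist G f g = cartesianEdgeSpan G}

/-- `K_n^+`: the complete graph `K_n` (on `Fin n`, with `v_1 = 0` and `v_n = n-1`)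
with the edge `v_1 v_n` subdivided through the new vertex `w = Sum.inr ()`. -/
def KnPlus (n : ℕ) : SimpleGraph (Fin n ⊕ Unit) :=
  SimpleGraph.fromRel (fun a b =>
    match a, b with
    | Sum.inl i, Sum.inl j =>
        ¬((i.val = 0 ∧ j.val = n - 1) ∨ (i.val = n - 1 ∧ j.val = 0))
    | Sum.inl i, Sum.inr _ => i.val = 0 ∨ i.val = n - 1
    | Sum.inr _, _ => False)

/-! The upper bound: a lazy track `f` has to enter or leave the subdivision vertex `w` at some
step, along an edge `w v_1` or `w v_n`; the opposite track waits during that step, and every vertex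
is within distance `1` of `w` or of the other end of that edge.

The lower bound: consider configurations of two labelled tokens on distinct vertices, a move
sliding one token along an edge (the subgraph of `G □ G` induced on the pairs off the diagonal).
For `K_n^+` with `n ≥ 4` all configurations are connected, because the two vertices `v_2, v_3`
are adjacent to all other `v_i`, leaving enough room to rearrange the tokens. A walk in this
configuration graph through, for every edge `xy`, a move of the first token along `xy` and a move
of the second token along `xy` gives two opposite lazy sweeps that never meet. -/

section Walks

variable {W : Type*} {K : SimpleGraph W}

lemma SimpleGraph.Walk.exists_getVert_of_mem_darts {u v : W} {p : K.Walk u v} {d : K.Dart}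
    (hd : d ∈ p.darts) : ∃ i < p.length, p.getVert i = d.fst ∧ p.getVert (i + 1) = d.snd := by
  obtain ⟨i, hi, rfl⟩ := List.mem_iff_getElem.mp hd
  rw [p.darts_getElem_eq_getVert i hi]
  exact ⟨i, p.length_darts ▸ hi, rfl, rfl⟩

lemma SimpleGraph.Preconnected.exists_walk_forall_mem_darts {ι : Type*} [Finite ι]
    (hK : K.Preconnected) (d : ι → K.Dart) (u : W) :
    ∃ v, ∃ p : K.Walk u v, ∀ i, d i ∈ p.darts := by
  suffices h : ∀ (L : List K.Dart) (u : W), ∃ v, ∃ p : K.Walk u v, ∀ e ∈ L, e ∈ p.darts by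
    have := Fintype.ofFinite ι
    obtain ⟨v, p, hp⟩ := h ((Finset.univ : Finset ι).toList.map d) u
    exact ⟨v, p, fun i => hp _ (List.mem_map_of_mem (Finset.mem_toList.mpr (Finset.mem_univ i)))⟩
  intro L
  induction L with
  | nil => exact fun u => ⟨u, .nil, by simp⟩
  | cons e L ih =>
    intro u
    obtain ⟨v, p, hp⟩ := ih e.snd
    refine ⟨v, (hK u e.fst).some.append (.cons e.adj p), ?_⟩
    simp only [List.mem_cons, Walk.darts_append, Walk.darts_cons, List.mem_append]
    rintro e' (rfl | he')
    · exact Or.inr (Or.inl rfl)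
    · exact Or.inr (Or.inr (hp e' he'))

end Walks

section Tracks

variable {V : Type*} {G : SimpleGraph V} {l : ℕ}

lemma mDist_le (f g : Fin l → V) (i : Fin l) : mDist G f g ≤ G.dist (f i) (g i) :=
  Nat.sInf_le ⟨i, rfl⟩

lemma one_le_mDist (hG : G.Connected) {f g : Fin l → V} (hl : 0 < l) (hfg : ∀ i, f i ≠ g i) :
    1 ≤ mDist G f g := by
  obtain ⟨i, hi⟩ := Nat.sInf_mem (s := {d | ∃ i : Fin l, G.dist (f i) (g i) = d}) ⟨_, ⟨0, hl⟩, rfl⟩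
  rw [mDist, ← hi]
  exact hG.pos_dist_of_ne (hfg i)

lemma IsLazyTrack.exists_adj_step_at {f : Fin l → V} (hf : IsLazyTrack G f) {v u : V}
    (huv : u ≠ v) : ∃ i, ∃ hi : i + 1 < l, G.Adj (f ⟨i, Nat.lt_of_succ_lt hi⟩) (f ⟨i + 1, hi⟩) ∧
      (f ⟨i, Nat.lt_of_succ_lt hi⟩ = v ∨ f ⟨i + 1, hi⟩ = v) := by
  obtain ⟨a, rfl⟩ := hf.1 v
  obtain ⟨b, rfl⟩ := hf.1 u
  obtain ⟨p⟩ := pathGraph_preconnected l a b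
  obtain ⟨⟨⟨⟨i, hi⟩, ⟨j, hj⟩⟩, hij⟩, -, hfi, hfj⟩ :=
    p.exists_boundary_dart {k | f k = f a} rfl huv
  simp only [Set.mem_ofPred_eq] at hfi hfj hij
  have hne : f ⟨i, hi⟩ ≠ f ⟨j, hj⟩ := fun h => hfj (h ▸ hfi)
  rcases pathGraph_adj.mp hij with rfl | rfl
  · exact ⟨i, hj, (hf.2 i hj).resolve_right hne, Or.inl hfi⟩
  · exact ⟨j, hi, (hf.2 j hi).resolve_right hne.symm, Or.inr hfi⟩

theorem mDist_le_one_of_forall_adj_dominating {f g : Fin l → V} (hf : IsLazyTrack G f)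
    (hop : IsOpposite G f g) {v u : V} (huv : u ≠ v)
    (hdom : ∀ x, G.Adj v x → ∀ y, G.dist v y ≤ 1 ∨ G.dist x y ≤ 1) : mDist G f g ≤ 1 := by
  obtain ⟨i, hi, hadj, hv⟩ := hf.exists_adj_step_at huv
  have hg := (hop i hi).mp hadj
  have hdom' : ∀ y, G.dist (f ⟨i, Nat.lt_of_succ_lt hi⟩) y ≤ 1 ∨ G.dist (f ⟨i + 1, hi⟩) y ≤ 1 := by
    rcases hv with hv | hv
    · exact hv ▸ hdom _ (hv ▸ hadj)
    · exact fun y => (hv ▸ hdom _ (hv ▸ hadj.symm) y).symm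
  rcases hdom' (g ⟨i, Nat.lt_of_succ_lt hi⟩) with h | h
  · exact (mDist_le _ _ _).trans h
  · exact (mDist_le _ _ _).trans (hg ▸ h)

lemma SweepCond.surjective {f : Fin l → V} (hf : SweepCond G f) (hG : ∀ v, ∃ u, G.Adj v u) :
    Function.Surjective f := by
  intro v
  obtain ⟨u, hvu⟩ := hG v
  obtain ⟨i, hi, he⟩ := hf s(v, u) hvu
  rcases Sym2.eq_iff.mp he with ⟨h, -⟩ | ⟨h, -⟩
  exacts [⟨_, h.symm⟩, ⟨_, h.symm⟩]

lemma sweepCond_of_forall_adj {f : Fin l → V}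
    (h : ∀ x y, G.Adj x y →
      ∃ i, ∃ hi : i + 1 < l, f ⟨i, Nat.lt_of_succ_lt hi⟩ = x ∧ f ⟨i + 1, hi⟩ = y) :
    SweepCond G f := by
  intro e he
  induction e using Sym2.ind with
  | _ x y =>
    obtain ⟨i, hi, rfl, rfl⟩ := h x y he
    exact ⟨i, hi, rfl⟩

variable {s : Fin l → V × V}
  (hs : ∀ i, ∀ hi : i + 1 < l, (G □ G).Adj (s ⟨i, Nat.lt_of_succ_lt hi⟩) (s ⟨i + 1, hi⟩))
include hs

lemma isOpposite_of_boxProd_adj : IsOpposite G (fun i => (s i).1) (fun i => (s i).2) := by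
  intro i hi
  rcases boxProd_adj.mp (hs i hi) with ⟨h, he⟩ | ⟨h, he⟩
  · exact iff_of_true h he
  · exact iff_of_false (fun h' => h'.ne he) h.ne

lemma isLazySweep_fst_of_boxProd_adj (hG : ∀ v, ∃ u, G.Adj v u)
    (hsweep : SweepCond G (fun i => (s i).1)) : IsLazySweep G (fun i => (s i).1) := by
  refine ⟨⟨hsweep.surjective hG, fun i hi => ?_⟩, hsweep⟩
  rcases boxProd_adj.mp (hs i hi) with ⟨h, -⟩ | ⟨-, h⟩
  exacts [Or.inl h, Or.inr h]

lemma isLazySweep_snd_of_boxProd_adj (hG : ∀ v, ∃ u, G.Adj v u)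
    (hsweep : SweepCond G (fun i => (s i).2)) : IsLazySweep G (fun i => (s i).2) :=
  isLazySweep_fst_of_boxProd_adj (s := Prod.swap ∘ s)
    (fun i hi => (boxProdComm G G).map_adj_iff.mpr (hs i hi)) hG hsweep

end Tracks

section DistinctPairs

variable {V : Type*}

abbrev distinctPairGraph (G : SimpleGraph V) : SimpleGraph {p : V × V // p.1 ≠ p.2} :=
  (G □ G).induce {p : V × V | p.1 ≠ p.2}

variable {G : SimpleGraph V}

lemma distinctPairGraph_adj {p q : {p : V × V // p.1 ≠ p.2}} :
    (distinctPairGraph G).Adj p q ↔ (G □ G).Adj p.1 q.1 :=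
  Iff.rfl

lemma distinctPairGraph_reachable_fst {a a' b : V} (ha : G.Adj a a') (hab : a ≠ b) (hab' : a' ≠ b) :
    (distinctPairGraph G).Reachable ⟨(a, b), hab⟩ ⟨(a', b), hab'⟩ :=
  Adj.reachable <| distinctPairGraph_adj.mpr <| boxProd_adj.mpr (Or.inl ⟨ha, rfl⟩)

lemma distinctPairGraph_reachable_snd {a b b' : V} (hb : G.Adj b b') (hab : a ≠ b) (hab' : a ≠ b') :
    (distinctPairGraph G).Reachable ⟨(a, b), hab⟩ ⟨(a, b'), hab'⟩ :=
  Adj.reachable <| distinctPairGraph_adj.mpr <| boxProd_adj.mpr (Or.inr ⟨hb, rfl⟩)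

lemma distinctPairGraph_reachable_swap {a b c d : V} {hab : a ≠ b} {hcd : c ≠ d}
    (h : (distinctPairGraph G).Reachable ⟨(a, b), hab⟩ ⟨(c, d), hcd⟩) :
    (distinctPairGraph G).Reachable ⟨(b, a), hab.symm⟩ ⟨(d, c), hcd.symm⟩ :=
  h.map (⟨fun p => ⟨p.1.swap, p.2.symm⟩, fun h => (boxProdComm G G).map_adj_iff.mpr h⟩ :
    distinctPairGraph G →g distinctPairGraph G)

theorem exists_opposite_lazySweeps_ne [Finite V] [Nonempty V]
    (hpair : (distinctPairGraph G).Preconnected) (hthree : ∀ x y : V, ∃ z, z ≠ x ∧ z ≠ y)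
    (hG : ∀ v, ∃ u, G.Adj v u) :
    ∃ (l : ℕ) (f g : Fin l → V),
      IsLazySweep G f ∧ IsLazySweep G g ∧ IsOpposite G f g ∧ ∀ i, f i ≠ g i := by
  classical
  have := Fintype.ofFinite V
  choose z hz using hthree
  -- each edge `xy` is traversed by the first token while the second one waits at `z x y`, and
  -- vice versa
  let moves : G.Dart ⊕ G.Dart → (distinctPairGraph G).Dart
    | .inl d =>
      ⟨(⟨(d.fst, z d.fst d.snd), (hz _ _).1.symm⟩, ⟨(d.snd, z d.fst d.snd), (hz _ _).2.symm⟩),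
        distinctPairGraph_adj.mpr <| boxProd_adj.mpr (Or.inl ⟨d.adj, rfl⟩)⟩
    | .inr d =>
      ⟨(⟨(z d.fst d.snd, d.fst), (hz _ _).1⟩, ⟨(z d.fst d.snd, d.snd), (hz _ _).2⟩),
        distinctPairGraph_adj.mpr <| boxProd_adj.mpr (Or.inr ⟨d.adj, rfl⟩)⟩
  obtain ⟨v⟩ := ‹Nonempty V›
  obtain ⟨_, p, hp⟩ := hpair.exists_walk_forall_mem_darts moves ⟨(z v v, v), (hz v v).1⟩
  let s : Fin (p.length + 1) → V × V := fun i => (p.getVert i).1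
  have hs : ∀ i, ∀ hi : i + 1 < p.length + 1,
      (G □ G).Adj (s ⟨i, Nat.lt_of_succ_lt hi⟩) (s ⟨i + 1, hi⟩) :=
    fun i hi => p.adj_getVert_succ (i := i) (by omega)
  have hsweep_fst : SweepCond G (fun i => (s i).1) := by
    refine sweepCond_of_forall_adj fun x y hxy => ?_
    obtain ⟨i, hi, h, h'⟩ := p.exists_getVert_of_mem_darts (hp (.inl ⟨(x, y), hxy⟩))
    exact ⟨i, by omega, congrArg (fun q => q.1.1) h, congrArg (fun q => q.1.1) h'⟩
  have hsweep_snd : SweepCond G (fun i => (s i).2) := by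
    refine sweepCond_of_forall_adj fun x y hxy => ?_
    obtain ⟨i, hi, h, h'⟩ := p.exists_getVert_of_mem_darts (hp (.inr ⟨(x, y), hxy⟩))
    exact ⟨i, by omega, congrArg (fun q => q.1.2) h, congrArg (fun q => q.1.2) h'⟩
  exact ⟨_, _, _, isLazySweep_fst_of_boxProd_adj hs hG hsweep_fst,
    isLazySweep_snd_of_boxProd_adj hs hG hsweep_snd, isOpposite_of_boxProd_adj hs,
    fun i => (p.getVert i).2⟩

end DistinctPairs

namespace KnPlus

variable {n : ℕ}

lemma adj_inl_inl {i j : Fin n} :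
    (KnPlus n).Adj (.inl i) (.inl j) ↔
      i ≠ j ∧ ¬((i.val = 0 ∨ i.val = n - 1) ∧ (j.val = 0 ∨ j.val = n - 1)) := by
  simp only [KnPlus, fromRel_adj, ne_eq, Sum.inl.injEq, Fin.ext_iff]
  omega

lemma adj_inl_inr {i : Fin n} {u : Unit} :
    (KnPlus n).Adj (.inl i) (.inr u) ↔ i.val = 0 ∨ i.val = n - 1 := by
  simp [KnPlus]

lemma not_adj_inr_inr {u u' : Unit} : ¬(KnPlus n).Adj (.inr u) (.inr u') := by
  simp [KnPlus]

lemma adj_inl_of_middle {i j : Fin n} (hij : i ≠ j) (hj : j.val ≠ 0 ∧ j.val ≠ n - 1) :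
    (KnPlus n).Adj (.inl i) (.inl j) :=
  adj_inl_inl.mpr ⟨hij, by omega⟩

lemma connected (hn : 4 ≤ n) : (KnPlus n).Connected := by
  have hmid : (1 : ℕ) ≠ 0 ∧ 1 ≠ n - 1 := by omega
  refine (KnPlus n).connected_iff_exists_forall_reachable.mpr ⟨.inl ⟨1, by omega⟩, ?_⟩
  have hinl (i : Fin n) : (KnPlus n).Reachable (.inl ⟨1, by omega⟩) (.inl i) := by
    by_cases hi : i = ⟨1, by omega⟩
    · exact hi ▸ .rfl
    · exact (adj_inl_of_middle hi hmid).symm.reachable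
  rintro (i | u)
  · exact hinl i
  · exact (hinl ⟨0, by omega⟩).trans (adj_inl_inr.mpr (Or.inl rfl)).reachable

lemma exists_ne_ne (hn : 2 ≤ n) (x y : Fin n ⊕ Unit) : ∃ z, z ≠ x ∧ z ≠ y :=
  ENat.exists_ne_ne_of_three_le (by simp; exact_mod_cast (by omega : 3 ≤ n + 1)) x y

lemma dist_le_one_or_dist_le_one {x : Fin n ⊕ Unit} {u : Unit} (hx : (KnPlus n).Adj (.inr u) x)
    (y : Fin n ⊕ Unit) : (KnPlus n).dist (.inr u) y ≤ 1 ∨ (KnPlus n).dist x y ≤ 1 := by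
  obtain (i | u') := x
  · have hi := adj_inl_inr.mp hx.symm
    obtain (k | u') := y
    · by_cases hk : k.val = 0 ∨ k.val = n - 1
      · exact Or.inl (dist_eq_one_iff_adj.mpr (adj_inl_inr.mpr hk).symm).le
      · exact Or.inr
          (dist_eq_one_iff_adj.mpr (adj_inl_of_middle (by rintro rfl; omega) (by omega))).le
    · exact Or.inl (by simp)
  · exact absurd hx not_adj_inr_inr

lemma reachable_snd_middle (hn : 4 ≤ n) (a b : Fin n ⊕ Unit) (hab : a ≠ b) :
    ∃ k : Fin n, (k.val ≠ 0 ∧ k.val ≠ n - 1) ∧ ∃ hak : a ≠ .inl k,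
      (distinctPairGraph (KnPlus n)).Reachable ⟨(a, b), hab⟩ ⟨(a, .inl k), hak⟩ := by
  have hmid : ∃ k : Fin n, (k.val ≠ 0 ∧ k.val ≠ n - 1) ∧ a ≠ .inl k := by
    by_cases ha : a = .inl ⟨1, by omega⟩
    · exact ⟨⟨2, by omega⟩, by simp only; omega, by simp [ha]⟩
    · exact ⟨⟨1, by omega⟩, by simp only; omega, ha⟩
  have hinl (j : Fin n) (haj : a ≠ .inl j) : ∃ k : Fin n, (k.val ≠ 0 ∧ k.val ≠ n - 1) ∧
      ∃ hak : a ≠ .inl k,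
        (distinctPairGraph (KnPlus n)).Reachable ⟨(a, .inl j), haj⟩ ⟨(a, .inl k), hak⟩ := by
    by_cases hj : j.val ≠ 0 ∧ j.val ≠ n - 1
    · exact ⟨j, hj, haj, .rfl⟩
    · obtain ⟨k, hk, hak⟩ := hmid
      exact ⟨k, hk, hak, distinctPairGraph_reachable_snd
        (adj_inl_of_middle (by rintro rfl; omega) hk) haj hak⟩
  obtain (j | u) := b
  · exact hinl j hab
  · obtain ⟨e, he, hae⟩ : ∃ e : Fin n, (e.val = 0 ∨ e.val = n - 1) ∧ a ≠ .inl e := by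
      by_cases ha : a = .inl ⟨0, by omega⟩
      · exact ⟨⟨n - 1, by omega⟩, Or.inr rfl, by simp [ha, Fin.ext_iff]; omega⟩
      · exact ⟨⟨0, by omega⟩, Or.inl rfl, ha⟩
    obtain ⟨k, hk, hak, hr⟩ := hinl e hae
    exact ⟨k, hk, hak,
      (distinctPairGraph_reachable_snd (adj_inl_inr.mpr he).symm hab hae).trans hr⟩

lemma reachable_middle_pair (hn : 4 ≤ n) {i j : Fin n} (hi : i.val ≠ 0 ∧ i.val ≠ n - 1)
    (hj : j.val ≠ 0 ∧ j.val ≠ n - 1) (hij : (.inl i : Fin n ⊕ Unit) ≠ .inl j) :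
    (distinctPairGraph (KnPlus n)).Reachable ⟨(.inl i, .inl j), hij⟩
      ⟨(.inl ⟨1, by omega⟩, .inl ⟨2, by omega⟩), by simp⟩ := by
  -- the tokens travel `(i, j) → (0, j) → (0, n - 1) → (1, n - 1) → (1, 2)`
  refine (((distinctPairGraph_reachable_fst (a' := .inl ⟨0, by omega⟩) ?_ hij ?_).trans
    (distinctPairGraph_reachable_snd (b' := .inl ⟨n - 1, by omega⟩) ?_ ?_ ?_)).trans
    (distinctPairGraph_reachable_fst (a' := .inl ⟨1, by omega⟩) ?_ ?_ ?_)).trans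
    (distinctPairGraph_reachable_snd ?_ ?_ ?_)
  all_goals simp only [adj_inl_inl, ne_eq, Sum.inl.injEq, Fin.ext_iff]; omega

theorem preconnected_distinctPairGraph (hn : 4 ≤ n) :
    (distinctPairGraph (KnPlus n)).Preconnected := by
  suffices h : ∀ p, (distinctPairGraph (KnPlus n)).Reachable p
      ⟨(.inl ⟨1, by omega⟩, .inl ⟨2, by omega⟩), by simp⟩ from
    fun p q => (h p).trans (h q).symm
  rintro ⟨⟨a, b⟩, hab⟩
  obtain ⟨j, hj, haj, hb⟩ := reachable_snd_middle hn a b hab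
  obtain ⟨i, hi, hji, ha⟩ := reachable_snd_middle hn (.inl j) a haj.symm
  exact hb.trans ((distinctPairGraph_reachable_swap ha).trans
    (reachable_middle_pair hn hi hj hji.symm))

theorem mDist_le_one {l : ℕ} {f g : Fin l → Fin n ⊕ Unit} (hn : 0 < n)
    (hf : IsLazyTrack (KnPlus n) f) (hop : IsOpposite (KnPlus n) f g) :
    mDist (KnPlus n) f g ≤ 1 :=
  mDist_le_one_of_forall_adj_dominating hf hop (v := .inr ()) (u := .inl ⟨0, hn⟩) Sum.inl_ne_inr
    fun _ hx => dist_le_one_or_dist_le_one hx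

end KnPlus

theorem stmt8 (n : ℕ) (hn : 4 ≤ n) :
    cartesianVertexSpan (KnPlus n) = 1 ∧ cartesianEdgeSpan (KnPlus n) = 1 := by
  have hconn := KnPlus.connected hn
  have : Nontrivial (Fin n ⊕ Unit) := ⟨.inl ⟨0, by omega⟩, .inr (), Sum.inl_ne_inr⟩
  obtain ⟨l, f, g, hf, hg, hop, hfg⟩ := exists_opposite_lazySweeps_ne
    (KnPlus.preconnected_distinctPairGraph hn) (KnPlus.exists_ne_ne (by omega))
    hconn.preconnected.exists_adj_of_nontrivial
  have hl : 0 < l := Fin.pos_iff_nonempty.mpr ⟨(hf.1.1 (.inr ())).choose⟩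
  have hfg1 : mDist (KnPlus n) f g = 1 :=
    le_antisymm (KnPlus.mDist_le_one (by omega) hf.1 hop) (one_le_mDist hconn hl hfg)
  constructor
  · refine IsGreatest.csSup_eq ⟨⟨l, f, g, hf.1, hg.1, hop, hfg1⟩, ?_⟩
    rintro _ ⟨l', f', g', hf', -, hop', rfl⟩
    exact KnPlus.mDist_le_one (by omega) hf' hop'
  · refine IsGreatest.csSup_eq ⟨⟨l, f, g, hf, hg, hop, hfg1⟩, ?_⟩
    rintro _ ⟨l', f', g', hf', -, hop', rfl⟩
    exact KnPlus.mDist_le_one (by omega) hf'.1 hop'
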